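/- arXiv:0805.2762 — 6 statements merged into one kernel-verified Lean document; each statement's English description precedes it below -/
import Mathlib

section
/- In a complete CAT(0) space X, a nested decreasing sequence of nonempty closed bounded convex sets whose circumradii converge to a common value R, obtained as sublevel sets S_{R_i} = {x : sup_{q∈F} d(x,q) ≤ R_i} with R_i decreasing to R = inf_x sup_{q∈F} d(x,q) for a bounded closed convex set F, has intersection of diameter zero. -/
/-- `γ` restricted to `[a,b]` is a unit-speed (arc-length parameterized) geodesic segment. -/
def IsGeodesicOn {X : Type*} [MetricSpace X] (γ : ℝ → X) (a b : ℝ) : Prop :=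
  ∀ s ∈ Set.Icc a b, ∀ t ∈ Set.Icc a b, dist (γ s) (γ t) = |s - t|

/-- A CAT(0) (NPC) space: a geodesic metric space satisfying the triangle comparison
inequality `d(z,x_λ)² ≤ (1-λ)d(z,x₀)² + λ d(z,x₁)² - λ(1-λ)d(x₀,x₁)²`. -/
def CAT0 (X : Type*) [MetricSpace X] : Prop :=
  (∀ x y : X, ∃ γ : ℝ → X, IsGeodesicOn γ 0 (dist x y) ∧ γ 0 = x ∧ γ (dist x y) = y) ∧
  (∀ x y z : X, ∀ γ : ℝ → X, IsGeodesicOn γ 0 (dist x y) → γ 0 = x → γ (dist x y) = y →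
    ∀ l ∈ Set.Icc (0:ℝ) 1,
      dist z (γ (l * dist x y)) ^ 2 ≤
        (1 - l) * dist z x ^ 2 + l * dist z y ^ 2 - l * (1 - l) * dist x y ^ 2)

/-- A subset is (geodesically) convex if every geodesic between two of its points lies in it. -/
def GeodConvex {X : Type*} [MetricSpace X] (F : Set X) : Prop :=
  ∀ x ∈ F, ∀ y ∈ F, ∀ γ : ℝ → X, IsGeodesicOn γ 0 (dist x y) → γ 0 = x → γ (dist x y) = y →
    ∀ t ∈ Set.Icc 0 (dist x y), γ t ∈ F


/-- The nested sublevel sets `S_{R_i} = {x : sup_{q∈F} d(x,q) ≤ R_i}`, for `R_i` decreasing to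
the circumradius `R = inf_x sup_{q∈F} d(x,q)`, have intersection of diameter zero. -/
theorem stmt_1 {X : Type*} [MetricSpace X] [CompleteSpace X] (hX : CAT0 X)
    (F : Set X) (hne : F.Nonempty) (hbd : Bornology.IsBounded F) (hcl : IsClosed F)
    (hcv : GeodConvex F)
    (R : ℝ) (hR : R = ⨅ x : X, ⨆ q : F, dist x q)
    (Ri : ℕ → ℝ) (hanti : Antitone Ri) (hgt : ∀ i, R < Ri i)
    (hlim : Filter.Tendsto Ri Filter.atTop (nhds R)) :
    Metric.diam (⋂ i, {x : X | (⨆ q : F, dist x q) ≤ Ri i}) = 0 := by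

  classical
  obtain ⟨q0, hq0⟩ := hne
  obtain ⟨r, hr⟩ := hbd.subset_closedBall q0
  have hbdd : ∀ x : X, BddAbove (Set.range fun q : F => dist x q) := by
    intro x
    refine ⟨dist x q0 + r, ?_⟩
    rintro _ ⟨q, rfl⟩
    have hq := hr q.2
    rw [Metric.mem_closedBall] at hq
    calc dist x (q : X) ≤ dist x q0 + dist q0 q := dist_triangle _ _ _
      _ ≤ dist x q0 + r := by rw [dist_comm q0]; linarith
  set f : X → ℝ := fun x => ⨆ q : F, dist x q with hf
  have hf0 : ∀ x, 0 ≤ f x :=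
    fun x => le_trans dist_nonneg (le_ciSup (hbdd x) ⟨q0, hq0⟩)
  have hRle : ∀ x, R ≤ f x := by
    intro x
    rw [hR]
    exact ciInf_le ⟨0, by rintro _ ⟨y, rfl⟩; exact hf0 y⟩ x
  have hR0 : 0 ≤ R := by
    rw [hR]; exact Real.iInf_nonneg fun x => hf0 x
  apply Metric.diam_subsingleton
  intro x hx y hy
  simp only [Set.mem_iInter, Set.mem_setOf_eq] at hx hy
  have hfx : f x ≤ R := ge_of_tendsto hlim (Filter.Eventually.of_forall hx)
  have hfy : f y ≤ R := ge_of_tendsto hlim (Filter.Eventually.of_forall hy)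
  obtain ⟨γ, hγ, hγ0, hγ1⟩ := hX.1 x y
  set d := dist x y with hd
  set m := γ ((1/2 : ℝ) * d) with hm
  have hcomp : ∀ q : F, dist m (q : X) ^ 2 ≤ R ^ 2 - d ^ 2 / 4 := by
    intro q
    have h := hX.2 x y q γ hγ hγ0 hγ1 (1/2) ⟨by norm_num, by norm_num⟩
    have hqx : dist (q : X) x ≤ R := by
      rw [dist_comm]
      exact le_trans (le_ciSup (hbdd x) q) hfx
    have hqy : dist (q : X) y ≤ R := by
      rw [dist_comm]
      exact le_trans (le_ciSup (hbdd y) q) hfy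
    have h1 : (0:ℝ) ≤ dist (q:X) x := dist_nonneg
    have h2 : (0:ℝ) ≤ dist (q:X) y := dist_nonneg
    rw [dist_comm m (q : X)]
    nlinarith [h]
  have hAs : f m ≤ Real.sqrt (R ^ 2 - d ^ 2 / 4) := by
    haveI : Nonempty F := ⟨⟨q0, hq0⟩⟩
    apply ciSup_le
    intro q
    have := hcomp q
    have hnn : (0:ℝ) ≤ dist m (q : X) := dist_nonneg
    nlinarith [Real.sq_sqrt (le_trans (sq_nonneg _) this),
      Real.sqrt_nonneg (R ^ 2 - d ^ 2 / 4)]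
  have hRs : R ≤ Real.sqrt (R ^ 2 - d ^ 2 / 4) := le_trans (hRle m) hAs
  have hsq : R ^ 2 ≤ R ^ 2 - d ^ 2 / 4 := by
    have := Real.sq_sqrt (le_trans (sq_nonneg (dist m q0)) (hcomp ⟨q0, hq0⟩))
    nlinarith [Real.sqrt_nonneg (R ^ 2 - d ^ 2 / 4)]
  have hd0 : d = 0 := by nlinarith [dist_nonneg (x := x) (y := y)]
  exact dist_eq_zero.mp hd0
end

section
/- Euclidean space R^k is an FR space with the optimal constant ε₀ = 1 − √(k/(k+1)): every bounded subset of R^k of diameter D is contained in a closed ball of radius √(k/(k+1))·D/√2. -/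
/-!
By Helly's theorem in `ℝᵏ` it suffices to find, for any `k + 1` points of `A`, a point within
`R = √(k/(k+1)) · D/√2` of all of them. For a finite set `s`, take the center `c` of a smallest
enclosing ball, of radius `r`. Then `c` lies in the convex hull of the points of `s` at distance
`r` from it: otherwise a hyperplane separates `c` from them, and moving `c` slightly towards them
brings it strictly closer to all of `s`. Writing `c = ∑ wᵢ xᵢ` as a convex combination of at most
`k + 1` such points, `∑ᵢⱼ wᵢ wⱼ ‖xᵢ - xⱼ‖² = 2r²`, while the left side is at most
`D² (1 - ∑ wᵢ²) ≤ D² · k/(k+1)` by Cauchy–Schwarz.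
-/

open Finset Metric Filter Topology RealInnerProductSpace

section WeightedSums

variable {α : Type*} {s : Finset α} {w : α → ℝ}

lemma one_sub_sum_sq_le_of_sum_eq_one (hw : ∑ i ∈ s, w i = 1) {n : ℕ} (hs : #s ≤ n + 1) :
    1 - ∑ i ∈ s, w i ^ 2 ≤ n / (n + 1) := by
  have cauchy_schwarz := sq_sum_le_card_mul_sum_sq (s := s) (f := w)
  rw [hw, one_pow] at cauchy_schwarz
  have hs' : (#s : ℝ) ≤ n + 1 := by exact_mod_cast hs
  rw [le_div_iff₀ (by positivity)]
  nlinarith [sum_nonneg fun i (_ : i ∈ s) => sq_nonneg (w i)]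

lemma sum_sum_mul_mul_le (hw0 : ∀ i ∈ s, 0 ≤ w i) (hw1 : ∑ i ∈ s, w i = 1) {g : α → α → ℝ}
    {M : ℝ} (hg : ∀ i ∈ s, ∀ j ∈ s, g i j ≤ M) (hdiag : ∀ i ∈ s, g i i = 0) :
    ∑ i ∈ s, ∑ j ∈ s, w i * w j * g i j ≤ M * (1 - ∑ i ∈ s, w i ^ 2) := by
  have total : ∑ i ∈ s, ∑ j ∈ s, w i * w j * M = M := by
    simp only [← sum_mul, ← mul_sum, hw1, one_mul]
  -- the slack `M - g i j` is nonnegative, so the diagonal terms alone bound its weighted sum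
  have diagonal : ∑ i ∈ s, w i ^ 2 * M ≤ ∑ i ∈ s, ∑ j ∈ s, w i * w j * (M - g i j) := by
    refine sum_le_sum fun i hi => ?_
    calc w i ^ 2 * M = w i * w i * (M - g i i) := by rw [hdiag i hi]; ring
      _ ≤ ∑ j ∈ s, w i * w j * (M - g i j) :=
        single_le_sum (f := fun j => w i * w j * (M - g i j))
          (fun j hj => mul_nonneg (mul_nonneg (hw0 i hi) (hw0 j hj))
            (sub_nonneg.2 (hg i hi j hj))) hi
  simp only [mul_sub, sum_sub_distrib, total] at diagonal
  rw [← sum_mul] at diagonal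
  linarith

end WeightedSums

section InnerProductSpace

variable {E : Type*} [NormedAddCommGroup E] [InnerProductSpace ℝ E]

lemma sum_sum_mul_norm_sub_sq_eq {s : Finset E} {w : E → ℝ} (hw1 : ∑ x ∈ s, w x = 1) {c : E}
    (hc : ∑ x ∈ s, w x • (x - c) = 0) :
    ∑ x ∈ s, ∑ y ∈ s, w x * w y * ‖x - y‖ ^ 2 = 2 * ∑ x ∈ s, w x * ‖x - c‖ ^ 2 := by
  have expand : ∀ x y : E, w x * w y * ‖x - y‖ ^ 2 = w y * (w x * ‖x - c‖ ^ 2)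
      + w x * (w y * ‖y - c‖ ^ 2) - 2 * ⟪w x • (x - c), w y • (y - c)⟫ := by
    intro x y
    rw [show x - y = (x - c) - (y - c) by abel, norm_sub_sq_real, real_inner_smul_left,
      real_inner_smul_right]
    ring
  have cross : ∑ x ∈ s, ∑ y ∈ s, ⟪w x • (x - c), w y • (y - c)⟫ = 0 := by
    simp_rw [← inner_sum, ← sum_inner, hc, inner_zero_left]
  simp only [expand, sum_sub_distrib, sum_add_distrib, ← sum_mul, ← mul_sum, hw1, cross]
  ring

lemma two_mul_sq_le_of_mem_convexHull {n : ℕ} {s : Finset E} (hs : #s ≤ n + 1) {c : E}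
    (hc : c ∈ convexHull ℝ (s : Set E)) {r : ℝ} (hr : ∀ x ∈ s, dist x c = r) {D : ℝ}
    (hD : ∀ x ∈ s, ∀ y ∈ s, dist x y ≤ D) :
    2 * r ^ 2 ≤ n / (n + 1) * D ^ 2 := by
  obtain ⟨w, hw0, hw1, rfl⟩ := Finset.mem_convexHull'.1 hc
  have hbary : ∑ x ∈ s, w x • (x - ∑ y ∈ s, w y • y) = 0 := by
    simp only [smul_sub, sum_sub_distrib, ← sum_smul, hw1, one_smul, sub_self]
  have hr' : ∀ x ∈ s, ‖x - ∑ y ∈ s, w y • y‖ = r := fun x hx => by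
    rw [← dist_eq_norm, hr x hx]
  calc 2 * r ^ 2 = ∑ x ∈ s, ∑ y ∈ s, w x * w y * ‖x - y‖ ^ 2 := by
        rw [sum_sum_mul_norm_sub_sq_eq hw1 hbary, sum_congr rfl fun x hx => by rw [hr' x hx],
          ← sum_mul, hw1, one_mul]
    _ ≤ D ^ 2 * (1 - ∑ x ∈ s, w x ^ 2) :=
        sum_sum_mul_mul_le hw0 hw1
          (fun x hx y hy => pow_le_pow_left₀ (norm_nonneg _) (dist_eq_norm x y ▸ hD x hx y hy) 2)
          (fun x _ => by simp)
    _ ≤ D ^ 2 * (n / (n + 1)) :=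
        mul_le_mul_of_nonneg_left (one_sub_sum_sq_le_of_sum_eq_one hw1 hs) (sq_nonneg D)
    _ = n / (n + 1) * D ^ 2 := mul_comm _ _

lemma eventually_norm_sub_smul_lt {y v : E} (h : 0 < ⟪y, v⟫) :
    ∀ᶠ t in 𝓝[>] (0 : ℝ), ‖y - t • v‖ < ‖y‖ := by
  have hε : 0 < 2 * ⟪y, v⟫ / (‖v‖ ^ 2 + 1) := by positivity
  filter_upwards [Ioo_mem_nhdsGT hε] with t ⟨ht0, htε⟩
  rw [lt_div_iff₀ (by positivity)] at htε
  have hsq : ‖y - t • v‖ ^ 2 < ‖y‖ ^ 2 := by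
    rw [norm_sub_sq_real, real_inner_smul_right, norm_smul, Real.norm_of_nonneg ht0.le]
    nlinarith [sq_nonneg ‖v‖]
  exact lt_of_pow_lt_pow_left₀ 2 (norm_nonneg y) hsq

lemma exists_forall_inner_sub_pos_of_notMem_convexHull [CompleteSpace E] {s : Finset E} {c : E}
    (hc : c ∉ convexHull ℝ (s : Set E)) : ∃ v : E, ∀ x ∈ s, 0 < ⟪x - c, v⟫ := by
  obtain ⟨f, u, hfc, hfs⟩ := geometric_hahn_banach_point_closed (convex_convexHull ℝ _)
    (s.finite_toSet.isClosed_convexHull ℝ) hc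
  refine ⟨(InnerProductSpace.toDual ℝ E).symm f, fun x hx => ?_⟩
  rw [real_inner_comm, InnerProductSpace.toDual_symm_apply, map_sub]
  linarith [hfs x (subset_convexHull ℝ _ hx)]

lemma exists_forall_sup'_dist_le {X : Type*} [MetricSpace X] [ProperSpace X] {s : Finset X}
    (hs : s.Nonempty) : ∃ c, ∀ z, s.sup' hs (dist · c) ≤ s.sup' hs (dist · z) := by
  obtain ⟨x₀, hx₀⟩ := id hs
  have : Nonempty X := ⟨x₀⟩
  exact (Continuous.finset_sup'_apply hs fun x _ => continuous_const.dist continuous_id)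
    |>.exists_forall_le <| tendsto_atTop_mono (fun z => le_sup' (dist · z) hx₀)
      (tendsto_dist_left_cocompact_atTop x₀)

lemma mem_convexHull_farthest_of_forall_sup'_dist_le [CompleteSpace E] {s : Finset E}
    (hs : s.Nonempty) {c : E} (hc : ∀ z, s.sup' hs (dist · c) ≤ s.sup' hs (dist · z)) :
    c ∈ convexHull ℝ ↑(s.filter fun x => dist x c = s.sup' hs (dist · c)) := by
  set r := s.sup' hs (dist · c)
  by_contra hnot
  obtain ⟨v, hv⟩ := exists_forall_inner_sub_pos_of_notMem_convexHull hnot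
  have closer : ∀ᶠ t in 𝓝[>] (0 : ℝ), ∀ x ∈ s, dist x (c + t • v) < r := by
    refine (eventually_all_finset s).2 fun x hx => ?_
    by_cases hxr : dist x c = r
    · filter_upwards [eventually_norm_sub_smul_lt (hv x (mem_filter.2 ⟨hx, hxr⟩))] with t ht
      rwa [sub_sub, ← dist_eq_norm, ← dist_eq_norm, hxr] at ht
    · have hlt : dist x c < r := (le_sup' (dist · c) hx).lt_of_ne hxr
      refine nhdsWithin_le_nhds <| (Continuous.tendsto ?_ 0).eventually_lt_const ?_
      · fun_prop
      · simpa using hlt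
  obtain ⟨t, ht⟩ := closer.exists
  exact (hc (c + t • v)).not_gt ((sup'_lt_iff hs).2 ht)

lemma le_sqrt_mul_div_sqrt_two {a r D : ℝ} (hD : 0 ≤ D) (h : 2 * r ^ 2 ≤ a * D ^ 2) :
    r ≤ √a * D / √2 := by
  rw [← Real.sqrt_sq hD, ← Real.sqrt_mul' _ (sq_nonneg D), ← Real.sqrt_div' _ zero_le_two]
  exact Real.le_sqrt_of_sq_le (by linarith)

theorem exists_forall_dist_le_of_card_le [FiniteDimensional ℝ E] {n : ℕ} {s : Finset E}
    (hcard : #s ≤ n + 1) {D : ℝ} (hD : ∀ x ∈ s, ∀ y ∈ s, dist x y ≤ D) :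
    ∃ c, ∀ x ∈ s, dist x c ≤ √(n / (n + 1)) * D / √2 := by
  rcases s.eq_empty_or_nonempty with rfl | hs
  · exact ⟨0, by simp⟩
  obtain ⟨c, hc⟩ := exists_forall_sup'_dist_le hs
  set r := s.sup' hs (dist · c)
  have hrD : 2 * r ^ 2 ≤ n / (n + 1) * D ^ 2 :=
    two_mul_sq_le_of_mem_convexHull ((card_filter_le _ _).trans hcard)
      (mem_convexHull_farthest_of_forall_sup'_dist_le hs hc) (fun x hx => (mem_filter.1 hx).2)
      (fun x hx y hy => hD x (mem_of_mem_filter x hx) y (mem_of_mem_filter y hy))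
  obtain ⟨x₀, hx₀⟩ := hs
  exact ⟨c, fun x hx => (le_sup' (dist · c) hx).trans
    (le_sqrt_mul_div_sqrt_two (dist_nonneg.trans (hD x₀ hx₀ x₀ hx₀)) hrD)⟩

end InnerProductSpace

/-- Jung's theorem: `ℝᵏ` is FR with the optimal constant `ε₀ = 1 - √(k/(k+1))`: every bounded
subset of `ℝᵏ` of diameter `D` is contained in a closed ball of radius `√(k/(k+1))·D/√2`. -/
theorem stmt_4 (k : ℕ) (A : Set (EuclideanSpace ℝ (Fin k))) (hA : Bornology.IsBounded A) :
    ∃ c : EuclideanSpace ℝ (Fin k),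
      A ⊆ Metric.closedBall c
        (Real.sqrt ((k : ℝ) / ((k : ℝ) + 1)) * Metric.diam A / Real.sqrt 2) := by
  set R := √(k / (k + 1)) * diam A / √2
  have finite_subfamilies : ∀ I : Finset A,
      #I ≤ Module.finrank ℝ (EuclideanSpace ℝ (Fin k)) + 1 →
      (⋂ a ∈ I, closedBall (a : EuclideanSpace ℝ (Fin k)) R).Nonempty := by
    intro I hI
    rw [finrank_euclideanSpace_fin] at hI
    obtain ⟨c, hc⟩ := exists_forall_dist_le_of_card_le (s := I.image Subtype.val)
      (card_image_le.trans hI) (by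
        simp only [mem_image]
        rintro _ ⟨a, -, rfl⟩ _ ⟨b, -, rfl⟩
        exact dist_le_diam_of_mem hA a.2 b.2)
    exact ⟨c, Set.mem_iInter₂.2 fun a ha => mem_closedBall'.2 (hc a (mem_image_of_mem _ ha))⟩
  obtain ⟨c, hc⟩ := Convex.helly_theorem_compact' (fun _ => convex_closedBall _ _)
    (fun _ => isCompact_closedBall _ _) finite_subfamilies
  exact ⟨c, fun x hx => mem_closedBall_comm.1 (Set.mem_iInter.1 hc ⟨x, hx⟩)⟩
end

section
/- Let v₁, …, v_{k+1} be vectors in R^k with ‖v_i‖ = R for all i, and λ₁, …, λ_{k+1} ∈ [0,1] with Σλ_i = 1 and Σ λ_i v_i = 0. If ‖v_i − v_j‖ ≤ D for all i ≠ j, then 2R² ≤ (1 − 1/(k+1)) D², i.e. R ≤ √(k/(k+1)) · D/√2. -/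
/-!
Expanding `‖vᵢ - vⱼ‖² = ‖vᵢ‖² + ‖vⱼ‖² - 2⟪vᵢ, vⱼ⟫` and using `∑ λᵢ vᵢ = 0` gives
`∑_{i,j} λᵢ λⱼ ‖vᵢ - vⱼ‖² = 2R²`. Only the off-diagonal terms contribute, each at most
`λᵢ λⱼ D²`, so `2R² ≤ (1 - ∑ λᵢ²) D²`, and Cauchy–Schwarz gives `∑ λᵢ² ≥ 1/(k+1)`.
-/

open Finset

variable {ι E : Type*} [Fintype ι]

theorem sum_sum_mul_mul_norm_sub_sq [NormedAddCommGroup E] [InnerProductSpace ℝ E]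
    (l : ι → ℝ) (v : ι → E) :
    ∑ i, ∑ j, l i * l j * ‖v i - v j‖ ^ 2
      = 2 * (∑ i, l i) * (∑ i, l i * ‖v i‖ ^ 2) - 2 * ‖∑ i, l i • v i‖ ^ 2 := by
  have hcross : ‖∑ i, l i • v i‖ ^ 2 = ∑ i, ∑ j, l i * l j * inner ℝ (v i) (v j) := by
    rw [← real_inner_self_eq_norm_sq, sum_inner]
    simp only [inner_sum, real_inner_smul_left, real_inner_smul_right]
    exact sum_congr rfl fun i _ => sum_congr rfl fun j _ => by ring
  calc ∑ i, ∑ j, l i * l j * ‖v i - v j‖ ^ 2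
      = ∑ i, ∑ j, (l j * (l i * ‖v i‖ ^ 2) + l i * (l j * ‖v j‖ ^ 2)
          - 2 * (l i * l j * inner ℝ (v i) (v j))) := by
        refine sum_congr rfl fun i _ => sum_congr rfl fun j _ => ?_
        rw [norm_sub_sq_real]
        ring
    _ = _ := by
        simp only [sum_add_distrib, sum_sub_distrib, ← sum_mul, ← mul_sum, hcross]
        ring

theorem sum_sum_mul_mul_norm_sub_sq_le [SeminormedAddCommGroup E] {l : ι → ℝ} (hl : ∀ i, 0 ≤ l i)
    {v : ι → E} {D : ℝ} (hD : ∀ i j, i ≠ j → ‖v i - v j‖ ≤ D) :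
    ∑ i, ∑ j, l i * l j * ‖v i - v j‖ ^ 2 ≤ ((∑ i, l i) ^ 2 - ∑ i, l i ^ 2) * D ^ 2 := by
  classical
  have hterm : ∀ i j, l i * l j * ‖v i - v j‖ ^ 2
      ≤ l i * l j * D ^ 2 - if i = j then l i * l j * D ^ 2 else 0 := by
    intro i j
    split_ifs with hij
    · simp [hij]
    · have := pow_le_pow_left₀ (norm_nonneg _) (hD i j hij) 2
      simpa using mul_le_mul_of_nonneg_left this (mul_nonneg (hl i) (hl j))
  calc ∑ i, ∑ j, l i * l j * ‖v i - v j‖ ^ 2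
      ≤ ∑ i, ∑ j, (l i * l j * D ^ 2 - if i = j then l i * l j * D ^ 2 else 0) :=
        sum_le_sum fun i _ => sum_le_sum fun j _ => hterm i j
    _ = ((∑ i, l i) ^ 2 - ∑ i, l i ^ 2) * D ^ 2 := by
        simp only [sum_sub_distrib, sum_ite_eq, mem_univ, if_true]
        rw [sq (∑ i, l i), sum_mul_sum, sub_mul, sum_mul, sum_mul]
        simp only [sum_mul, sq]

theorem inv_card_le_sum_sq_of_sum_eq_one [Nonempty ι] {l : ι → ℝ} (hsum : ∑ i, l i = 1) :
    1 / (Fintype.card ι : ℝ) ≤ ∑ i, l i ^ 2 := by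
  have h := sq_sum_le_card_mul_sum_sq (s := univ) (f := l)
  rw [hsum, card_univ] at h
  rw [div_le_iff₀ (by positivity)]
  linarith

/-- If `v₁, …, v_{k+1}` are vectors in `ℝᵏ` of norm `R`, forming a convex combination of the
origin with weights `λᵢ`, and mutually at distance at most `D`, then
`2R² ≤ (1 - 1/(k+1))·D²`. -/
theorem stmt_5 (k : ℕ) (R D : ℝ) (v : Fin (k + 1) → EuclideanSpace ℝ (Fin k))
    (l : Fin (k + 1) → ℝ) (hl : ∀ i, l i ∈ Set.Icc (0 : ℝ) 1)
    (hsum : ∑ i, l i = 1) (hbary : ∑ i, l i • v i = 0)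
    (hnorm : ∀ i, ‖v i‖ = R)
    (hD : ∀ i j, i ≠ j → ‖v i - v j‖ ≤ D) :
    2 * R ^ 2 ≤ (1 - 1 / ((k : ℝ) + 1)) * D ^ 2 := by
  have hpairs : ∑ i, ∑ j, l i * l j * ‖v i - v j‖ ^ 2 = 2 * R ^ 2 := by
    simp [sum_sum_mul_mul_norm_sub_sq, hnorm, hbary, ← sum_mul, hsum]
  have hupper : ∑ i, ∑ j, l i * l j * ‖v i - v j‖ ^ 2 ≤ (1 - ∑ i, l i ^ 2) * D ^ 2 := by
    simpa [hsum] using sum_sum_mul_mul_norm_sub_sq_le (fun i => (hl i).1) hD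
  have hsq : 1 / ((k : ℝ) + 1) ≤ ∑ i, l i ^ 2 := by
    simpa using inv_card_le_sum_sq_of_sum_eq_one hsum
  calc 2 * R ^ 2 = ∑ i, ∑ j, l i * l j * ‖v i - v j‖ ^ 2 := hpairs.symm
    _ ≤ (1 - ∑ i, l i ^ 2) * D ^ 2 := hupper
    _ ≤ (1 - 1 / ((k : ℝ) + 1)) * D ^ 2 := by gcongr
end

section
/- Let X be a complete CAT(0) space, p ∈ X, R > 0, and A ⊂ ∂B_R(p). If for every geodesic σ issuing from p one has sup_{q ∈ A} ∠_p(σ, q) ≥ π/2, then p is the circumcenter of the closed convex hull of A. -/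
/-- The Alexandrov angle at `p` between a geodesic `σ` issuing from `p` and the point `q`,
characterized (in a CAT(0) space) via the first variation of the distance function. -/
noncomputable def alexAngle {X : Type*} [MetricSpace X] (p : X) (σ : ℝ → X) (q : X) : ℝ :=
  Real.arccos (Filter.limsup (fun t => (dist p q - dist (σ t) q) / t)
    (nhdsWithin 0 (Set.Ioi 0)))

/-- The closed convex hull: the intersection of all closed geodesically convex sets
containing `A`. -/
def metricClosedConvexHull {X : Type*} [MetricSpace X] (A : Set X) : Set X :=
  ⋂₀ {C : Set X | A ⊆ C ∧ IsClosed C ∧ GeodConvex C}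

/-- Closed balls are geodesically convex in a CAT(0) space. -/
lemma geodConvex_closedBall {X : Type*} [MetricSpace X] (hX : CAT0 X) (p : X) (R : ℝ) :
    GeodConvex (Metric.closedBall p R) := by
  intro u hu v hv γ hγ h0 h1 t ht
  rcases eq_or_lt_of_le (dist_nonneg : (0:ℝ) ≤ dist u v) with hd | hd
  · have ht0 : t = 0 := le_antisymm (ht.2.trans hd.symm.le) ht.1
    simpa [ht0, h0] using hu
  · have hl : t / dist u v ∈ Set.Icc (0:ℝ) 1 :=
      ⟨div_nonneg ht.1 hd.le, (div_le_one hd).mpr ht.2⟩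
    have hcmp := hX.2 u v p γ hγ h0 h1 (t / dist u v) hl
    rw [div_mul_cancel₀ t hd.ne'] at hcmp
    have hu' : dist p u ≤ R := by rw [dist_comm]; exact Metric.mem_closedBall.mp hu
    have hv' : dist p v ≤ R := by rw [dist_comm]; exact Metric.mem_closedBall.mp hv
    have hn : (0:ℝ) ≤ dist p (γ t) := dist_nonneg
    have hRn : (0:ℝ) ≤ R := le_trans dist_nonneg hu'
    rw [Metric.mem_closedBall, dist_comm]
    have ha2 : dist p u ^ 2 ≤ R ^ 2 :=
      sq_le_sq' (by linarith [dist_nonneg (α := X) (x := p) (y := u)]) hu'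
    have hb2 : dist p v ^ 2 ≤ R ^ 2 :=
      sq_le_sq' (by linarith [dist_nonneg (α := X) (x := p) (y := v)]) hv'
    have hsq : dist p (γ t) ^ 2 ≤ R ^ 2 := by
      nlinarith [mul_nonneg (mul_nonneg hl.1 (by linarith [hl.2] : (0:ℝ) ≤ 1 - t / dist u v))
        (sq_nonneg (dist u v)), mul_nonneg hl.1 (sub_nonneg.mpr hb2),
        mul_nonneg (by linarith [hl.2] : (0:ℝ) ≤ 1 - t / dist u v) (sub_nonneg.mpr ha2)]
    exact (pow_le_pow_iff_left₀ hn hRn (by norm_num)).mp hsq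

/-- Convexity of the distance function along a geodesic in a CAT(0) space:
the difference quotient at the endpoint bounds the difference quotient at any earlier time. -/
lemma conv_aux {X : Type*} [MetricSpace X] (hX : CAT0 X) (σ : ℝ → X) (ε : ℝ) (hε : 0 < ε)
    (hσ : IsGeodesicOn σ 0 ε) (q : X) (t : ℝ) (ht : t ∈ Set.Ioc 0 ε) :
    (dist (σ 0) q - dist (σ ε) q) / ε ≤ (dist (σ 0) q - dist (σ t) q) / t := by
  have hd : dist (σ 0) (σ ε) = ε := by
    have := hσ 0 ⟨le_refl 0, hε.le⟩ ε ⟨hε.le, le_refl ε⟩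
    rw [this, zero_sub, abs_neg, abs_of_nonneg hε.le]
  have hl0 : 0 ≤ t / ε := div_nonneg ht.1.le hε.le
  have hl1 : t / ε ≤ 1 := (div_le_one hε).mpr ht.2
  have hcmp := hX.2 (σ 0) (σ ε) q σ (by rw [hd]; exact hσ) rfl (by rw [hd]) (t / ε) ⟨hl0, hl1⟩
  rw [hd, div_mul_cancel₀ t hε.ne'] at hcmp
  rw [dist_comm q (σ t), dist_comm q (σ 0), dist_comm q (σ ε)] at hcmp
  have habs := abs_le.mp (hd ▸ abs_dist_sub_le (σ 0) (σ ε) q)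
  have ha : 0 ≤ dist (σ 0) q := dist_nonneg
  have hb : 0 ≤ dist (σ ε) q := dist_nonneg
  have hc : 0 ≤ dist (σ t) q := dist_nonneg
  have hM : (0:ℝ) ≤ (1 - t/ε) * dist (σ 0) q + (t/ε) * dist (σ ε) q :=
    add_nonneg (mul_nonneg (by linarith) ha) (mul_nonneg hl0 hb)
  have hsqe : (dist (σ 0) q - dist (σ ε) q) ^ 2 ≤ ε ^ 2 := sq_le_sq' habs.1 habs.2
  have hM2 : dist (σ t) q ^ 2 ≤ ((1 - t/ε) * dist (σ 0) q + (t/ε) * dist (σ ε) q) ^ 2 := by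
    nlinarith [mul_nonneg (mul_nonneg hl0 (by linarith : (0:ℝ) ≤ 1 - t/ε))
      (sub_nonneg.mpr hsqe)]
  have hlin : dist (σ t) q ≤ (1 - t/ε) * dist (σ 0) q + (t/ε) * dist (σ ε) q :=
    (pow_le_pow_iff_left₀ hc hM (by norm_num)).mp hM2
  rw [div_le_div_iff₀ hε ht.1]
  have hte : t / ε * ε = t := div_mul_cancel₀ t hε.ne'
  nlinarith [hlin, ht.1]

/-- If `A ⊆ ∂B_R(p)` and every geodesic `σ` issuing from `p` satisfies
`sup_{q∈A} ∠_p(σ,q) ≥ π/2`, then `p` is the circumcenter of the closed convex hull of `A`,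
i.e. `p` minimizes `x ↦ sup_{q ∈ cvx(A)} d(x,q)`. -/
theorem stmt_10 {X : Type*} [MetricSpace X] [CompleteSpace X] (hX : CAT0 X)
    (p : X) (R : ℝ) (hR : 0 < R) (A : Set X) (hA : A ⊆ Metric.sphere p R)
    (hangle : ∀ ε > (0 : ℝ), ∀ σ : ℝ → X, IsGeodesicOn σ 0 ε → σ 0 = p →
      Real.pi / 2 ≤ ⨆ q : A, alexAngle p σ q) :
    ∀ x : X, (⨆ q : metricClosedConvexHull A, dist p q) ≤ ⨆ q : metricClosedConvexHull A, dist x q := by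
  intro x
  classical
  -- the hull is contained in the closed ball
  have hmem : Metric.closedBall p R ∈ {C : Set X | A ⊆ C ∧ IsClosed C ∧ GeodConvex C} :=
    ⟨hA.trans Metric.sphere_subset_closedBall, Metric.isClosed_closedBall, geodConvex_closedBall hX p R⟩
  have hCsub : metricClosedConvexHull A ⊆ Metric.closedBall p R :=
    Set.sInter_subset_of_mem hmem
  have hAC : A ⊆ metricClosedConvexHull A := fun a ha =>
    Set.mem_sInter.mpr fun C hC => hC.1 ha
  have hLHS : (⨆ q : metricClosedConvexHull A, dist p q) ≤ R :=
    Real.iSup_le (fun q => by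
      have := hCsub q.2
      rw [Metric.mem_closedBall] at this
      rwa [dist_comm]) hR.le
  rcases Set.eq_empty_or_nonempty A with hAe | hAne
  · -- empty case: the hull is empty and both suprema are 0
    have hCe : metricClosedConvexHull A = ∅ := by
      apply Set.eq_empty_of_subset_empty
      apply Set.sInter_subset_of_mem
      refine ⟨by rw [hAe], isClosed_empty, ?_⟩
      intro u hu; exact absurd hu (Set.notMem_empty u)
    rw [hCe]
    have : IsEmpty (↥(∅ : Set X)) := by simp
    simp [Real.iSup_of_isEmpty]
  · -- nonempty case
    have hAne' : Nonempty ↥A := hAne.to_subtype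
    have hbddA : BddAbove (Set.range fun q : A => dist x q) := by
      refine ⟨dist x p + R, ?_⟩
      rintro _ ⟨q, rfl⟩
      have hq : dist (q : X) p = R := hA q.2
      calc dist x (q : X) ≤ dist x p + dist p q := dist_triangle _ _ _
        _ = dist x p + R := by rw [dist_comm p q, hq]
    have hbddC : BddAbove (Set.range fun q : metricClosedConvexHull A => dist x q) := by
      refine ⟨dist x p + R, ?_⟩
      rintro _ ⟨q, rfl⟩
      have hq : dist (q : X) p ≤ R := Metric.mem_closedBall.mp (hCsub q.2)
      calc dist x (q : X) ≤ dist x p + dist (q : X) p := dist_triangle_right _ _ _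
        _ ≤ dist x p + R := by linarith
    -- key claim: R ≤ ⨆ q : A, dist x q
    have key : R ≤ ⨆ q : A, dist x q := by
      by_cases hxp : x = p
      · obtain ⟨q0, hq0⟩ := hAne
        have : R = dist x (q0 : X) := by rw [hxp, dist_comm]; exact (hA hq0).symm
        rw [this]
        exact le_ciSup hbddA ⟨q0, hq0⟩
      · obtain ⟨σ, hσ, hσ0, hσε⟩ := hX.1 p x
        set ε := dist p x with hεdef
        have hε : 0 < ε := dist_pos.mpr fun h => hxp h.symm
        have hsup := hangle ε hε σ hσ hσ0
        have main : ∀ δ : ℝ, 0 < δ → δ < Real.pi / 2 →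
            R - ε * Real.sin δ ≤ ⨆ q : A, dist x q := by
          intro δ hδ hδ2
          have h1 : Real.pi / 2 - δ < ⨆ q : A, alexAngle p σ q :=
            lt_of_lt_of_le (by linarith) hsup
          obtain ⟨q, hq⟩ := exists_lt_of_lt_ciSup h1
          set L := Filter.limsup (fun t => (dist p (q : X) - dist (σ t) q) / t)
            (nhdsWithin 0 (Set.Ioi 0)) with hLdef
          have hLle : L ≤ Real.sin δ := by
            by_contra hcon
            push_neg at hcon
            have harc : alexAngle p σ (q : X) ≤ Real.pi / 2 - δ := by
              have h2 : Real.arcsin (Real.sin δ) ≤ Real.arcsin L :=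
                Real.monotone_arcsin hcon.le
              rw [Real.arcsin_sin (by linarith [Real.pi_pos]) (by linarith)] at h2
              show Real.arccos L ≤ _
              rw [Real.arccos_eq_pi_div_two_sub_arcsin]
              linarith
            linarith
          have hIoc : Set.Ioc (0:ℝ) ε ∈ nhdsWithin 0 (Set.Ioi 0) :=
            Ioc_mem_nhdsGT_of_mem ⟨le_refl 0, hε⟩
          have hbddL : Filter.IsBoundedUnder (· ≤ ·) (nhdsWithin 0 (Set.Ioi 0))
              (fun t => (dist p (q : X) - dist (σ t) q) / t) := by
            refine ⟨1, ?_⟩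
            rw [Filter.eventually_map]
            filter_upwards [hIoc] with t ht
            have hdd : dist (σ 0) (σ t) = t := by
              have := hσ 0 ⟨le_refl 0, hε.le⟩ t ⟨ht.1.le, ht.2⟩
              rw [this, zero_sub, abs_neg, abs_of_nonneg ht.1.le]
            have : dist p (q : X) - dist (σ t) q ≤ t := by
              have h3 := abs_le.mp (abs_dist_sub_le (σ 0) (σ t) (q : X))
              rw [hdd, hσ0] at h3
              linarith [h3.2]
            rw [div_le_one ht.1]
            exact this
          have hfreq : (dist p (q : X) - dist x q) / ε ≤ L := by
            apply Filter.le_limsup_of_frequently_le _ hbddL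
            apply Filter.Eventually.frequently
            filter_upwards [hIoc] with t ht
            have := conv_aux hX σ ε hε hσ q t ht
            rw [hσ0] at this
            rw [hεdef] at this ⊢
            rwa [hσε] at this
          have hpq : dist p (q : X) = R := by rw [dist_comm]; exact hA q.2
          have hxq : R - ε * Real.sin δ ≤ dist x (q : X) := by
            have h4 := hfreq.trans hLle
            rw [hpq, div_le_iff₀ hε] at h4
            nlinarith
          exact hxq.trans (le_ciSup hbddA q)
        -- take δ → 0
        by_contra hcon
        push_neg at hcon
        set S := ⨆ q : A, dist x q with hS
        set c := R - S with hc
        have hcpos : 0 < c := by simp [hc]; linarith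
        set δ := min (c / (2 * ε)) (Real.pi / 4) with hδdef
        have hδpos : 0 < δ := lt_min (by positivity) (by positivity)
        have hδlt : δ < Real.pi / 2 :=
          lt_of_le_of_lt (min_le_right _ _) (by linarith [Real.pi_pos])
        have h5 := main δ hδpos hδlt
        have hsin : Real.sin δ ≤ δ := Real.sin_le hδpos.le
        have h6 : δ ≤ c / (2 * ε) := min_le_left _ _
        have h7 : ε * δ ≤ c / 2 := by
          rw [le_div_iff₀ (by norm_num : (0:ℝ) < 2)]
          calc ε * δ * 2 ≤ ε * (c / (2 * ε)) * 2 := by nlinarith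
            _ = c := by field_simp
        nlinarith [mul_le_mul_of_nonneg_left hsin hε.le]
    -- conclude
    have hAleC : (⨆ q : A, dist x q) ≤ ⨆ q : metricClosedConvexHull A, dist x q := by
      apply Real.iSup_le _ ?_
      · intro q
        exact le_ciSup hbddC ⟨q, hAC q.2⟩
      · obtain ⟨q0, hq0⟩ := hAne
        exact le_trans dist_nonneg (le_ciSup hbddC ⟨q0, hAC hq0⟩)
    exact hLHS.trans (key.trans hAleC)
end

section
/- In a CAT(0) space, for a bounded set S and any point x in the closed convex hull of S, sup_{q ∈ closure(convexHull S)} d(x, q) = sup_{q ∈ S} d(x, q). -/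
/-!
By the CAT(0) comparison inequality, closed balls are geodesically convex. Hence the closed
ball around `x` of radius `sup_{q ∈ S} d(x, q)` is a closed convex set containing `S`, so it
contains the closed convex hull of `S`; the reverse inequality holds because `S` lies in its hull.
-/

open Metric

section

variable {X : Type*} [MetricSpace X]

theorem subset_metricClosedConvexHull (A : Set X) : A ⊆ metricClosedConvexHull A :=
  fun _ ha _ hC => hC.1 ha

theorem metricClosedConvexHull_subset {A C : Set X} (hAC : A ⊆ C) (hC : IsClosed C)
    (hconv : GeodConvex C) : metricClosedConvexHull A ⊆ C :=
  Set.sInter_subset_of_mem ⟨hAC, hC, hconv⟩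

theorem geodConvex_empty : GeodConvex (∅ : Set X) :=
  fun _ ha => (Set.notMem_empty _ ha).elim

theorem metricClosedConvexHull_empty : metricClosedConvexHull (∅ : Set X) = ∅ :=
  Set.subset_empty_iff.1 <|
    metricClosedConvexHull_subset subset_rfl isClosed_empty geodConvex_empty

theorem CAT0.geodConvex_closedBall (hX : CAT0 X) (z : X) (r : ℝ) :
    GeodConvex (closedBall z r) := by
  intro a ha b hb γ hγ h0 h1 t ht
  rw [mem_closedBall'] at ha hb ⊢
  rcases (dist_nonneg : 0 ≤ dist a b).eq_or_lt with hab | hab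
  · obtain rfl : t = 0 := by linarith [ht.1, ht.2]
    rwa [h0]
  · set l := t / dist a b
    have hl : l ∈ Set.Icc (0 : ℝ) 1 := ⟨div_nonneg ht.1 hab.le, (div_le_one hab).2 ht.2⟩
    have comparison := hX.2 a b z γ hγ h0 h1 l hl
    rw [div_mul_cancel₀ t hab.ne'] at comparison
    have hr : 0 ≤ r := dist_nonneg.trans ha
    have hsq : dist z (γ t) ^ 2 ≤ r ^ 2 := by
      have ha2 := pow_le_pow_left₀ dist_nonneg ha 2
      have hb2 := pow_le_pow_left₀ dist_nonneg hb 2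
      nlinarith [mul_le_mul_of_nonneg_left ha2 (sub_nonneg.2 hl.2),
        mul_le_mul_of_nonneg_left hb2 hl.1,
        mul_nonneg (mul_nonneg hl.1 (sub_nonneg.2 hl.2)) (sq_nonneg (dist a b))]
    exact (pow_le_pow_iff_left₀ dist_nonneg hr two_ne_zero).1 hsq

end

/-- In a CAT(0) space, for a bounded set `S` and any point `x` of the closed convex hull of `S`,
the supremum of distances from `x` to the closed convex hull equals the supremum of distances
from `x` to `S`. -/
theorem stmt_11 {X : Type*} [MetricSpace X] (hX : CAT0 X)
    (S : Set X) (hbd : Bornology.IsBounded S)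
    (x : X) (hx : x ∈ metricClosedConvexHull S) :
    (⨆ q : metricClosedConvexHull S, dist x q) = ⨆ q : S, dist x q := by
  have hS : S.Nonempty := by
    refine Set.nonempty_iff_ne_empty.2 fun hS => ?_
    rwa [hS, metricClosedConvexHull_empty] at hx
  have hbddS : BddAbove (Set.range fun q : S => dist x q) := by
    obtain ⟨r, hr⟩ := hbd.subset_closedBall x
    exact ⟨r, Set.forall_mem_range.2 fun q => mem_closedBall'.1 (hr q.2)⟩
  set R := ⨆ q : S, dist x q
  have hhull : metricClosedConvexHull S ⊆ closedBall x R :=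
    metricClosedConvexHull_subset (fun q hq => mem_closedBall'.2 (le_ciSup hbddS ⟨q, hq⟩))
      isClosed_closedBall (hX.geodConvex_closedBall x R)
  have hbddHull : BddAbove (Set.range fun q : metricClosedConvexHull S => dist x q) :=
    ⟨R, Set.forall_mem_range.2 fun q => mem_closedBall'.1 (hhull q.2)⟩
  have : Nonempty S := hS.to_subtype
  have : Nonempty (metricClosedConvexHull S) := ⟨⟨x, hx⟩⟩
  refine le_antisymm (ciSup_le fun q => mem_closedBall'.1 (hhull q.2)) (ciSup_le fun q => ?_)
  exact le_ciSup hbddHull ⟨q, subset_metricClosedConvexHull S q.2⟩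
end

section
/- A complete CAT(0) geodesic metric space X has the geodesic extension property (every local geodesic c : [a,b] → X with a ≠ b extends to a local geodesic on [a, b+ε] for some ε > 0) if and only if every local geodesic segment σ : [a,b] → X can be extended to a geodesic line R → X. -/
/-- `c` restricted to `[a,b]` is a local geodesic: around each parameter it is locally an
arc-length parameterized isometric embedding. -/
def IsLocalGeodesicOn {X : Type*} [MetricSpace X] (c : ℝ → X) (a b : ℝ) : Prop :=
  ∀ t ∈ Set.Icc a b, ∃ ε > (0 : ℝ),
    ∀ s ∈ Set.Icc a b ∩ Set.Icc (t - ε) (t + ε),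
      ∀ u ∈ Set.Icc a b ∩ Set.Icc (t - ε) (t + ε), dist (c s) (c u) = |s - u|

/-- The geodesic extension property: every local geodesic on a nondegenerate interval extends
to a local geodesic on a strictly larger interval. -/
def GeodesicExtensionProperty (X : Type*) [MetricSpace X] : Prop :=
  ∀ a b : ℝ, a < b → ∀ c : ℝ → X, IsLocalGeodesicOn c a b →
    ∃ ε > (0 : ℝ), ∃ c' : ℝ → X, IsLocalGeodesicOn c' a (b + ε) ∧ Set.EqOn c c' (Set.Icc a b)

open Set Filter Topology Metric

section Geodesics

variable {X : Type*} [MetricSpace X] {γ : ℝ → X} {a b : ℝ}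

theorem IsGeodesicOn.dist_eq_sub (h : IsGeodesicOn γ a b) {s t : ℝ} (hs : a ≤ s) (hst : s ≤ t)
    (ht : t ≤ b) : dist (γ s) (γ t) = t - s := by
  rw [h s ⟨hs, hst.trans ht⟩ t ⟨hs.trans hst, ht⟩, abs_sub_comm, abs_of_nonneg (sub_nonneg.2 hst)]

theorem isGeodesicOn_of_dist_eq_sub
    (h : ∀ s t, a ≤ s → s ≤ t → t ≤ b → dist (γ s) (γ t) = t - s) : IsGeodesicOn γ a b := by
  intro s hs t ht
  rcases le_total s t with hst | hts
  · rw [h s t hs.1 hst ht.2, abs_sub_comm, abs_of_nonneg (sub_nonneg.2 hst)]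
  · rw [dist_comm, h t s ht.1 hts hs.2, abs_of_nonneg (sub_nonneg.2 hts)]

theorem IsGeodesicOn.mono (h : IsGeodesicOn γ a b) {a' b' : ℝ} (ha : a ≤ a') (hb : b' ≤ b) :
    IsGeodesicOn γ a' b' :=
  fun s hs t ht => h s ⟨ha.trans hs.1, hs.2.trans hb⟩ t ⟨ha.trans ht.1, ht.2.trans hb⟩

theorem IsGeodesicOn.isLocalGeodesicOn (h : IsGeodesicOn γ a b) : IsLocalGeodesicOn γ a b :=
  fun _ _ => ⟨1, one_pos, fun s hs t ht => h s hs.1 t ht.1⟩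

theorem IsGeodesicOn.comp_sub (h : IsGeodesicOn γ a b) (σ : ℝ) :
    IsGeodesicOn (fun t => γ (σ - t)) (σ - b) (σ - a) := by
  intro s hs t ht
  rw [h (σ - s) ⟨by linarith [hs.2], by linarith [hs.1]⟩ (σ - t)
    ⟨by linarith [ht.2], by linarith [ht.1]⟩, sub_sub_sub_cancel_left, abs_sub_comm]

theorem IsLocalGeodesicOn.exists_isGeodesicOn_of_sub_le (h : IsLocalGeodesicOn γ a b) :
    ∃ δ > 0, ∀ u v, a ≤ u → v ≤ b → v - u ≤ δ → IsGeodesicOn γ u v := by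
  choose ε hε hloc using h
  obtain ⟨δ, hδ, hcover⟩ := lebesgue_number_lemma_of_metric
    (c := fun t : Icc a b => ball (t : ℝ) (ε t t.2)) isCompact_Icc (fun _ => isOpen_ball)
    (fun t ht => mem_iUnion.2 ⟨⟨t, ht⟩, mem_ball_self (hε t ht)⟩)
  refine ⟨δ / 2, half_pos hδ, fun u v hu hv huv => ?_⟩
  rcases lt_or_ge v u with hvu | hvu
  · exact fun s hs => absurd (hs.1.trans hs.2) (not_le.2 hvu)
  obtain ⟨⟨t, ht⟩, hball⟩ := hcover u ⟨hu, hvu.trans hv⟩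
  have hsub : Icc u v ⊆ Icc a b ∩ Icc (t - ε t ht) (t + ε t ht) := fun s hs =>
    ⟨⟨hu.trans hs.1, hs.2.trans hv⟩, Ioo_subset_Icc_self <| Real.ball_eq_Ioo t _ ▸ hball <|
      Real.ball_eq_Ioo u δ ▸ Icc_subset_Ioo (by linarith) (by linarith) hs⟩
  exact fun s hs s' hs' => hloc t ht s (hsub hs) s' (hsub hs')

end Geodesics

section CAT0

variable {X : Type*} [MetricSpace X] {γ : ℝ → X}

theorem CAT0.apply_dist_eq_of_dist_add_dist_eq (hX : CAT0 X) {x y m : X}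
    (hγ : IsGeodesicOn γ 0 (dist x y)) (h0 : γ 0 = x) (h1 : γ (dist x y) = y)
    (hm : dist x m + dist m y = dist x y) :
    γ (dist x m) = m := by
  rcases (dist_nonneg : 0 ≤ dist x y).eq_or_lt with hxy | hxy
  · have hxm : dist x m = 0 := by
      linarith [dist_nonneg (x := x) (y := m), dist_nonneg (x := m) (y := y)]
    rw [hxm, h0, dist_eq_zero.1 hxm]
  · have hl : dist x m / dist x y ∈ Icc (0 : ℝ) 1 :=
      ⟨by positivity, div_le_one_of_le₀ (by linarith [dist_nonneg (x := m) (y := y)]) hxy.le⟩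
    have key := hX.2 x y m γ hγ h0 h1 _ hl
    rw [div_mul_cancel₀ _ hxy.ne', dist_comm m x, ← hm] at key
    have hzero : dist m (γ (dist x m)) ^ 2 ≤ 0 := by
      refine key.trans_eq ?_
      rw [← hm] at hxy
      field_simp
      ring
    exact (dist_eq_zero.1 (pow_eq_zero_iff two_ne_zero |>.1 (le_antisymm hzero (sq_nonneg _)))).symm

theorem CAT0.mul_dist_sq_le (hX : CAT0 X) {x y m : X} (hm : dist x m + dist m y = dist x y)
    (z : X) :
    dist x y * dist z m ^ 2 ≤
      dist m y * dist z x ^ 2 + dist x m * dist z y ^ 2 - dist x m * dist m y * dist x y := by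
  obtain ⟨γ, hγ, h0, h1⟩ := hX.1 x y
  rcases (dist_nonneg : 0 ≤ dist x y).eq_or_lt with hxy | hxy
  · have := dist_nonneg (x := x) (y := m)
    have := dist_nonneg (x := m) (y := y)
    obtain ⟨hxm, hmy⟩ : dist x m = 0 ∧ dist m y = 0 := ⟨by linarith, by linarith⟩
    simp [← hxy, hxm, hmy]
  · have hl : dist x m / dist x y ∈ Icc (0 : ℝ) 1 :=
      ⟨by positivity, div_le_one_of_le₀ (by linarith [dist_nonneg (x := m) (y := y)]) hxy.le⟩
    have key := hX.2 x y z γ hγ h0 h1 _ hl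
    rw [div_mul_cancel₀ _ hxy.ne', hX.apply_dist_eq_of_dist_add_dist_eq hγ h0 h1 hm] at key
    have := mul_le_mul_of_nonneg_left key hxy.le
    refine this.trans_eq ?_
    rw [← hm] at hxy ⊢
    field_simp
    ring

theorem CAT0.dist_add_dist_eq (hX : CAT0 X) {p q m r : X} (hqm : 0 < dist q m)
    (hqr : dist q m + dist m r = dist q r) (hpm : dist p q + dist q m = dist p m) :
    dist p m + dist m r = dist p r := by
  refine le_antisymm ?_ (dist_triangle p m r)
  have key := hX.mul_dist_sq_le hqr p
  have hsq : dist q m * (dist p m + dist m r) ^ 2 ≤ dist q m * dist p r ^ 2 := by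
    rw [← hqr] at key
    rw [← hpm] at key ⊢
    linear_combination key
  exact (pow_le_pow_iff_left₀ (by positivity) dist_nonneg two_ne_zero).1
    (le_of_mul_le_mul_left hsq hqm)

theorem CAT0.isGeodesicOn_of_overlap (hX : CAT0 X) {a x t y : ℝ} (hxt : x < t) (hty : t ≤ y)
    (h₁ : IsGeodesicOn γ a t) (h₂ : IsGeodesicOn γ x y) : IsGeodesicOn γ a y := by
  refine isGeodesicOn_of_dist_eq_sub fun s u hs hsu hu => ?_
  rcases le_or_gt u t with hut | htu
  · exact h₁.dist_eq_sub hs hsu hut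
  rcases le_or_gt x s with hxs | hsx
  · exact h₂.dist_eq_sub hxs hsu hu
  have hxt' := h₂.dist_eq_sub le_rfl hxt.le hty
  have hbranch := hX.dist_add_dist_eq (p := γ s) (r := γ u) (by linarith)
    (by rw [hxt', h₂.dist_eq_sub hxt.le htu.le hu, h₂.dist_eq_sub le_rfl (hxt.trans htu).le hu]
        ring)
    (by rw [hxt', h₁.dist_eq_sub hs hsx.le hxt.le, h₁.dist_eq_sub hs (hsx.trans hxt).le le_rfl]
        ring)
  rw [← hbranch, h₁.dist_eq_sub hs (hsx.trans hxt).le le_rfl, h₂.dist_eq_sub hxt.le htu.le hu]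
  ring

theorem CAT0.isGeodesicOn_of_isLocalGeodesicOn (hX : CAT0 X) {a b : ℝ}
    (h : IsLocalGeodesicOn γ a b) : IsGeodesicOn γ a b := by
  obtain ⟨δ, hδ, hshort⟩ := h.exists_isGeodesicOn_of_sub_le
  suffices ∀ n : ℕ, ∀ v ≤ b, v - a ≤ n * (δ / 2) → IsGeodesicOn γ a v by
    obtain ⟨n, hn⟩ := exists_nat_ge ((b - a) / (δ / 2))
    exact this n b le_rfl ((div_le_iff₀ (half_pos hδ)).1 hn)
  intro n
  induction n with
  | zero => exact fun v hv hva => hshort a v le_rfl hv (by simp at hva; linarith)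
  | succ n ih =>
    intro v hv hva
    rcases le_or_gt (v - a) δ with hva' | hva'
    · exact hshort a v le_rfl hv hva'
    · exact hX.isGeodesicOn_of_overlap (x := v - δ) (t := v - δ / 2) (by linarith) (by linarith)
        (ih _ (by linarith) (by push_cast at hva; linarith))
        (hshort _ _ (by linarith) hv (by linarith))

end CAT0

section Completion

variable {X : Type*} [MetricSpace X] [CompleteSpace X] {a : ℝ}

theorem exists_isGeodesicOn_update {U : ℝ → X} {D : ℝ} (haD : a < D)
    (hU : ∀ s ∈ Ico a D, ∀ t ∈ Ico a D, dist (U s) (U t) = |s - t|) :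
    ∃ y, IsGeodesicOn (Function.update U D y) a D := by
  have : (𝓝[Ico a D] D).NeBot := right_nhdsWithin_Ico_neBot haD
  have hlip : LipschitzOnWith 1 U (Ico a D) := LipschitzOnWith.of_dist_le_mul fun s hs t ht => by
    rw [hU s hs t ht, NNReal.coe_one, one_mul, Real.dist_eq]
  obtain ⟨y, hy⟩ := CompleteSpace.complete <|
    (cauchy_nhds (a := D) |>.mono nhdsWithin_le_nhds).map_of_le hlip.uniformContinuousOn
      inf_le_right
  have hdist : ∀ s ∈ Ico a D, dist (U s) y = |s - D| := fun s hs =>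
    tendsto_nhds_unique (tendsto_const_nhds.dist hy) <|
      (((continuous_const.sub continuous_id).abs.tendsto D).mono_left nhdsWithin_le_nhds).congr'
        (eventually_nhdsWithin_of_forall fun t ht => (hU s hs t ht).symm)
  refine ⟨y, fun s hs t ht => ?_⟩
  rcases hs.2.lt_or_eq with hsD | rfl <;> rcases ht.2.lt_or_eq with htD | rfl
  · rw [Function.update_of_ne hsD.ne, Function.update_of_ne htD.ne]
    exact hU s ⟨hs.1, hsD⟩ t ⟨ht.1, htD⟩
  · rw [Function.update_of_ne hsD.ne, Function.update_self]
    exact hdist s ⟨hs.1, hsD⟩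
  · rw [Function.update_of_ne htD.ne, Function.update_self, dist_comm, abs_sub_comm]
    exact hdist t ⟨ht.1, htD⟩
  · simp

theorem exists_isGeodesicOn_ciSup {ι : Type*} [Nonempty ι] {e : ι → ℝ} {g : ι → ℝ → X}
    (hbdd : BddAbove (range e)) (hae : ∀ i, a < e i) (hg : ∀ i, IsGeodesicOn (g i) a (e i))
    (hcompat : ∀ i j, e i ≤ e j → EqOn (g i) (g j) (Icc a (e i))) :
    ∃ G, IsGeodesicOn G a (⨆ i, e i) ∧ ∀ i, EqOn (g i) G (Icc a (e i)) := by
  classical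
  let U : ℝ → X := fun t =>
    if h : ∃ i, t ≤ e i then g h.choose t else g (Classical.arbitrary ι) t
  have hU : ∀ i, EqOn (g i) U (Icc a (e i)) := by
    intro i t ht
    have h : ∃ j, t ≤ e j := ⟨i, ht.2⟩
    simp only [U, dif_pos h]
    rcases le_total (e i) (e h.choose) with hij | hji
    · exact hcompat _ _ hij ht
    · exact (hcompat _ _ hji ⟨ht.1, h.choose_spec⟩).symm
  by_cases hmax : ∃ i, e i = ⨆ i, e i
  · obtain ⟨i, hi⟩ := hmax
    exact ⟨g i, hi ▸ hg i, fun j => hcompat j i (hi ▸ le_ciSup hbdd j)⟩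
  push Not at hmax
  have hlt : ∀ i, e i < ⨆ i, e i := fun i => (le_ciSup hbdd i).lt_of_ne (hmax i)
  obtain ⟨y, hy⟩ := exists_isGeodesicOn_update (U := U)
    ((hae (Classical.arbitrary ι)).trans (hlt _)) fun s hs t ht => by
      obtain ⟨i, hi⟩ := exists_lt_of_lt_ciSup (max_lt hs.2 ht.2)
      have hs' : s ∈ Icc a (e i) := ⟨hs.1, (le_max_left s t).trans hi.le⟩
      have ht' : t ∈ Icc a (e i) := ⟨ht.1, (le_max_right s t).trans hi.le⟩
      rw [← hU i hs', ← hU i ht']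
      exact hg i s hs' t ht'
  refine ⟨_, hy, fun i t ht => ?_⟩
  rw [Function.update_of_ne (ht.2.trans_lt (hlt i)).ne]
  exact hU i ht

end Completion

theorem exists_seq_of_forall_exists_succ {α : Type*} {P : ℕ → α → Prop} {R : ℕ → α → α → Prop}
    {x₀ : α} (h₀ : P 0 x₀) (h : ∀ n x, P n x → ∃ y, P (n + 1) y ∧ R n x y) :
    ∃ f : ℕ → α, f 0 = x₀ ∧ ∀ n, P n (f n) ∧ R n (f n) (f (n + 1)) := by
  choose! next hnext using h
  let f : ℕ → α := fun n => Nat.rec (motive := fun _ => α) x₀ next n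
  have hP : ∀ n, P n (f n) := by
    intro n
    induction n with
    | zero => exact h₀
    | succ n ih => exact (hnext n _ ih).1
  exact ⟨f, rfl, fun n => ⟨hP n, (hnext n _ (hP n)).2⟩⟩

section Extension

variable {X : Type*} [MetricSpace X] {f : ℝ → X} {a b : ℝ}

theorem exists_isometry_of_nested {G : ℕ → ℝ → X}
    (hG : ∀ n : ℕ, IsGeodesicOn (G n) (a - n) (b + n))
    (hnest : ∀ n : ℕ, EqOn (G n) (G (n + 1)) (Icc (a - n) (b + n))) :
    ∃ L : ℝ → X, (∀ s t, dist (L s) (L t) = |s - t|) ∧ EqOn (G 0) L (Icc a b) := by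
  have hmono : ∀ m n, m ≤ n → EqOn (G m) (G n) (Icc (a - m) (b + m)) := by
    intro m n hmn
    induction n, hmn using Nat.le_induction with
    | base => exact fun _ _ => rfl
    | succ n hmn ih =>
      have : (m : ℝ) ≤ n := Nat.cast_le.2 hmn
      exact fun t ht => (ih ht).trans (hnest n ⟨by linarith [ht.1], by linarith [ht.2]⟩)
  let N : ℝ → ℕ := fun t => ⌈max (a - t) (t - b)⌉₊
  have hN : ∀ t n, N t ≤ n → t ∈ Icc (a - n) (b + n) := by
    intro t n hn
    have : max (a - t) (t - b) ≤ n := (Nat.le_ceil _).trans (Nat.cast_le.2 hn)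
    constructor <;> linarith [le_max_left (a - t) (t - b), le_max_right (a - t) (t - b)]
  refine ⟨fun t => G (N t) t, fun s t => ?_,
    fun t ht => hmono 0 (N t) (Nat.zero_le _) (by simpa using ht)⟩
  have hs := le_max_left (N s) (N t)
  have ht := le_max_right (N s) (N t)
  change dist (G (N s) s) (G (N t) t) = _
  rw [hmono _ _ hs (hN s _ le_rfl), hmono _ _ ht (hN t _ le_rfl)]
  exact hG _ s (hN s _ hs) t (hN t _ ht)

theorem GeodesicExtensionProperty.exists_isGeodesicOn_extension (hE : GeodesicExtensionProperty X)
    (hX : CAT0 X) (hab : a < b) (hf : IsGeodesicOn f a b) :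
    ∃ ε > 0, ∃ g, IsGeodesicOn g a (b + ε) ∧ EqOn f g (Icc a b) := by
  obtain ⟨ε, hε, g, hg, hfg⟩ := hE a b hab f hf.isLocalGeodesicOn
  exact ⟨ε, hε, g, hX.isGeodesicOn_of_isLocalGeodesicOn hg, hfg⟩

variable [CompleteSpace X]

theorem CAT0.exists_isGeodesicOn_extend_right (hX : CAT0 X) (hE : GeodesicExtensionProperty X)
    {e : ℝ} (hab : a < b) (hbe : b ≤ e) (hf : IsGeodesicOn f a b) :
    ∃ g, IsGeodesicOn g a e ∧ EqOn f g (Icc a b) := by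
  let P := {p : ℝ × (ℝ → X) // p.1 ∈ Icc b e ∧ IsGeodesicOn p.2 a p.1 ∧ EqOn f p.2 (Icc a b)}
  let R : P → P → Prop := fun p q => p.1.1 ≤ q.1.1 ∧ EqOn p.1.2 q.1.2 (Icc a p.1.1)
  have hchain : ∀ C : Set P, IsChain R C → ∃ ub, ∀ p ∈ C, R p ub := by
    intro C hC
    rcases C.eq_empty_or_nonempty with rfl | ⟨p₀, hp₀⟩
    · exact ⟨⟨(b, f), ⟨le_rfl, hbe⟩, hf, fun _ _ => rfl⟩, by simp⟩
    have : Nonempty C := ⟨⟨p₀, hp₀⟩⟩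
    have hbdd : BddAbove (range fun p : C => p.1.1.1) :=
      ⟨e, by rintro _ ⟨p, rfl⟩; exact p.1.2.1.2⟩
    have hcompat : ∀ p q : C, p.1.1.1 ≤ q.1.1.1 → EqOn p.1.1.2 q.1.1.2 (Icc a p.1.1.1) := by
      intro p q hpq
      by_cases hpq' : p = q
      · exact hpq' ▸ fun _ _ => rfl
      rcases hC p.2 q.2 (Subtype.coe_ne_coe.2 hpq') with h | h
      · exact h.2
      · exact fun t ht => (h.2 (le_antisymm hpq h.1 ▸ ht)).symm
    obtain ⟨G, hG, hpG⟩ := exists_isGeodesicOn_ciSup hbdd (fun p => hab.trans_le p.1.2.1.1)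
      (fun p => p.1.2.2.1) hcompat
    refine ⟨⟨(_, G), ⟨p₀.2.1.1.trans (le_ciSup hbdd ⟨p₀, hp₀⟩), ciSup_le fun p => p.1.2.1.2⟩,
      hG, fun t ht => (p₀.2.2.2 ht).trans (hpG ⟨p₀, hp₀⟩ ⟨ht.1, ht.2.trans p₀.2.1.1⟩)⟩,
      fun p hp => ⟨le_ciSup hbdd ⟨p, hp⟩, hpG ⟨p, hp⟩⟩⟩
  obtain ⟨m, hm⟩ := exists_maximal_of_chains_bounded hchain fun hpq hqr =>
    ⟨hpq.1.trans hqr.1, fun t ht => (hpq.2 ht).trans (hqr.2 ⟨ht.1, ht.2.trans hpq.1⟩)⟩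
  rcases m.2.1.2.eq_or_lt with hme | hme
  · exact ⟨m.1.2, m.2.2.1.mono le_rfl hme.ge, m.2.2.2⟩
  obtain ⟨ε, hε, g, hg, hmg⟩ :=
    hE.exists_isGeodesicOn_extension hX (hab.trans_le m.2.1.1) m.2.2.1
  have hlt : m.1.1 < min (m.1.1 + ε) e := lt_min (by linarith) hme
  let q : P := ⟨(min (m.1.1 + ε) e, g), ⟨m.2.1.1.trans hlt.le, min_le_right _ _⟩,
    hg.mono le_rfl (min_le_left _ _),
    fun t ht => (m.2.2.2 ht).trans (hmg ⟨ht.1, ht.2.trans m.2.1.1⟩)⟩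
  exact absurd (hm q ⟨hlt.le, hmg⟩).1 (not_le.2 hlt)

theorem CAT0.exists_isGeodesicOn_extend (hX : CAT0 X) (hE : GeodesicExtensionProperty X)
    {a' b' : ℝ} (hab : a < b) (ha' : a' ≤ a) (hb' : b ≤ b') (hf : IsGeodesicOn f a b) :
    ∃ g, IsGeodesicOn g a' b' ∧ EqOn f g (Icc a b) := by
  obtain ⟨g₁, hg₁, hfg₁⟩ := hX.exists_isGeodesicOn_extend_right hE hab hb' hf
  set σ := a + b'
  have hrev : IsGeodesicOn (fun t => g₁ (σ - t)) a b' := by simpa [σ] using hg₁.comp_sub σ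
  obtain ⟨g₂, hg₂, hg₁₂⟩ :=
    hX.exists_isGeodesicOn_extend_right hE (hab.trans_le hb') (show b' ≤ σ - a' by linarith) hrev
  refine ⟨fun t => g₂ (σ - t), by simpa [σ] using hg₂.comp_sub σ, fun t ht => ?_⟩
  have h := hg₁₂ (show σ - t ∈ Icc a b' from ⟨by linarith [ht.2], by linarith [ht.1]⟩)
  simp only [sub_sub_cancel] at h
  exact (hfg₁ ht).trans h

theorem CAT0.exists_isometry_extension (hX : CAT0 X) (hE : GeodesicExtensionProperty X)
    (hab : a < b) (hf : IsGeodesicOn f a b) :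
    ∃ L : ℝ → X, (∀ s t, dist (L s) (L t) = |s - t|) ∧ EqOn f L (Icc a b) := by
  obtain ⟨G, rfl, hG⟩ := exists_seq_of_forall_exists_succ
    (P := fun n g => IsGeodesicOn g (a - n) (b + n))
    (R := fun n g g' => EqOn g g' (Icc (a - n) (b + n))) (by simpa using hf) fun n g hg => by
      have : (0 : ℝ) ≤ n := n.cast_nonneg
      exact hX.exists_isGeodesicOn_extend hE (by linarith) (by push_cast; linarith)
        (by push_cast; linarith) hg
  exact exists_isometry_of_nested (fun n => (hG n).1) (fun n => (hG n).2)

end Extension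

/-- A complete CAT(0) space has the geodesic extension property iff every local geodesic
segment extends to a geodesic line `ℝ → X`. -/
theorem stmt_18 {X : Type*} [MetricSpace X] [CompleteSpace X] (hX : CAT0 X) :
    GeodesicExtensionProperty X ↔
      ∀ a b : ℝ, a < b → ∀ c : ℝ → X, IsLocalGeodesicOn c a b →
        ∃ L : ℝ → X, (∀ s t : ℝ, dist (L s) (L t) = |s - t|) ∧
          Set.EqOn c L (Set.Icc a b) := by
  refine ⟨fun hE a b hab c hc =>
    hX.exists_isometry_extension hE hab (hX.isGeodesicOn_of_isLocalGeodesicOn hc), fun h => ?_⟩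
  intro a b hab c hc
  obtain ⟨L, hL, hcL⟩ := h a b hab c hc
  exact ⟨1, one_pos, L, fun _ _ => ⟨1, one_pos, fun s _ u _ => hL s u⟩, hcL⟩
end
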